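/- arXiv:2407.21147 — 2 statements merged into one kernel-verified Lean document; each statement's English description precedes it below -/
import Mathlib

section
/- Let p : E → C be a fibration of categories (cloven), let ℂ be a precategory in C with a reflexive coequalizer C₁ ⇉ C₀ → π₀(ℂ), and let P be a precategory in E lying over ℂ with all structure arrows cartesian, admitting a reflexive coequalizer P₁ ⇉ P₀ → π₀(P) in E. Then the image under p of the coequalizer diagram P₁ ⇉ P₀ → π₀(P) is a reflexive coequalizer diagram in C; in particular p(π₀(P)) ≅ π₀(ℂ). -/
/-!
**Statement 6.** Let `p : E ⥤ C` be a cloven fibration, `ℂ` a precategory in `C` with a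
reflexive coequaliser `C₁ ⇉ C₀ → π₀(ℂ)`, and `P` a precategory in `E` lying over `ℂ` with
all structure arrows cartesian, admitting a reflexive coequaliser `P₁ ⇉ P₀ → π₀(P)` in `E`.
Then the image under `p` of the coequaliser diagram `P₁ ⇉ P₀ → π₀(P)` is again a
coequaliser diagram in `C`; in particular `p(π₀(P)) ≅ π₀(ℂ)`.
-/

open CategoryTheory CategoryTheory.Limits

namespace DGal

universe v₁ u₁ v u

/-- An internal precategory in `C`. -/
structure Precat (C : Type u) [Category.{v} C] where
  C2 : C
  C1 : C
  C0 : C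
  r0 : C2 ⟶ C1
  r1 : C2 ⟶ C1
  m : C2 ⟶ C1
  d0 : C1 ⟶ C0
  d1 : C1 ⟶ C0
  n : C0 ⟶ C1
  hr : r1 ≫ d0 = r0 ≫ d1
  hn0 : n ≫ d0 = 𝟙 C0
  hn1 : n ≫ d1 = 𝟙 C0
  hm0 : m ≫ d0 = r0 ≫ d0
  hm1 : m ≫ d1 = r1 ≫ d1

variable {E : Type u₁} [Category.{v₁} E] {C : Type u} [Category.{v} C]

/-- A morphism `φ` in `E` is cartesian for the functor `p : E ⥤ C` if every morphism
into its target whose image factors through `p(φ)` factors uniquely through `φ`,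
compatibly with the chosen factorisation downstairs. -/
def IsCartesianArrow (p : E ⥤ C) {a b : E} (φ : a ⟶ b) : Prop :=
  ∀ ⦃c : E⦄ (ψ : c ⟶ b) (g : p.obj c ⟶ p.obj a),
    g ≫ p.map φ = p.map ψ → ∃! χ : c ⟶ a, χ ≫ φ = ψ ∧ p.map χ = g

/-- `p : E ⥤ C` is a cloven fibration: every morphism of `C` with a lift of its target
admits a cartesian lift. -/
def IsClovenFibration (p : E ⥤ C) : Prop :=
  ∀ (b : E) (X : C) (f : X ⟶ p.obj b), ∃ (a : E) (e : p.obj a = X) (φ : a ⟶ b),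
    IsCartesianArrow p φ ∧ p.map φ = eqToHom e ≫ f

/-- The image of a precategory in `E` under a functor `p : E ⥤ C`. -/
def mapPrecat (p : E ⥤ C) (P : Precat E) : Precat C where
  C2 := p.obj P.C2
  C1 := p.obj P.C1
  C0 := p.obj P.C0
  r0 := p.map P.r0
  r1 := p.map P.r1
  m := p.map P.m
  d0 := p.map P.d0
  d1 := p.map P.d1
  n := p.map P.n
  hr := by rw [← p.map_comp, ← p.map_comp, P.hr]
  hn0 := by rw [← p.map_comp, P.hn0, p.map_id]
  hn1 := by rw [← p.map_comp, P.hn1, p.map_id]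
  hm0 := by rw [← p.map_comp, ← p.map_comp, P.hm0]
  hm1 := by rw [← p.map_comp, ← p.map_comp, P.hm1]

end DGal

/-!
Let `t : W ⟶ p(π₀ P)` be the comparison map out of the coequaliser `W` downstairs and lift it
to a cartesian arrow `φ : a ⟶ π₀ P`. The coequaliser map `ρ` factors through `φ` over the
projection `P₀ ⟶ W`; by uniqueness of cartesian factorisations this factorisation again
coequalises `P₁ ⇉ P₀`, so it descends to a section `σ` of `φ`, and `p σ` inverts `t`.
-/

namespace DGal

variable {E C : Type*} [Category E] [Category C] {p : E ⥤ C}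

theorem IsCartesianArrow.hom_ext {a b e : E} {φ : a ⟶ b} (hφ : IsCartesianArrow p φ)
    {χ χ' : e ⟶ a} (h : χ ≫ φ = χ' ≫ φ) (hp : p.map χ = p.map χ') : χ = χ' :=
  (hφ (χ' ≫ φ) (p.map χ') (p.map_comp _ _).symm).unique ⟨h, hp⟩ ⟨rfl, rfl⟩

variable {X Y Z : E} {f g : X ⟶ Y} {π : Y ⟶ Z} {w : f ≫ π = g ≫ π}

theorem IsClovenFibration.exists_section_of_fac (hp : IsClovenFibration p)
    (hE : IsColimit (Cofork.ofπ π w)) {W : C} (c : p.obj Y ⟶ W)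
    (hc : p.map f ≫ c = p.map g ≫ c) (t : W ⟶ p.obj Z) (ht : c ≫ t = p.map π) :
    ∃ s : p.obj Z ⟶ W, p.map π ≫ s = c ∧ s ≫ t = 𝟙 _ := by
  obtain ⟨a, rfl, φ, hφ, hpφ⟩ := hp Z W t
  rw [eqToHom_refl, Category.id_comp] at hpφ
  obtain ⟨χ, ⟨hχφ, hpχ⟩, -⟩ := hφ π c (by rw [hpφ, ht])
  have hχ : f ≫ χ = g ≫ χ :=
    hφ.hom_ext (by simp only [Category.assoc, hχφ, w]) (by simp only [p.map_comp, hpχ, hc])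
  obtain ⟨σ, hσ : π ≫ σ = χ⟩ := Cofork.IsColimit.desc' hE χ hχ
  have hσφ : σ ≫ φ = 𝟙 Z :=
    Cofork.IsColimit.hom_ext hE (by simp [reassoc_of% hσ, hχφ])
  refine ⟨p.map σ, by rw [← p.map_comp, hσ, hpχ], ?_⟩
  rw [← hpφ, ← p.map_comp, hσφ, p.map_id]

theorem IsClovenFibration.nonempty_isColimit_map_cofork (hp : IsClovenFibration p)
    (hE : IsColimit (Cofork.ofπ π w)) {W : C} {c : p.obj Y ⟶ W}
    {hc : p.map f ≫ c = p.map g ≫ c} (hC : IsColimit (Cofork.ofπ c hc)) :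
    Nonempty (IsColimit (Cofork.ofπ (p.map π)
      (show p.map f ≫ p.map π = p.map g ≫ p.map π by rw [← p.map_comp, w, p.map_comp]))) := by
  obtain ⟨t, ht : c ≫ t = p.map π⟩ := Cofork.IsColimit.desc' hC (p.map π) (by
    rw [← p.map_comp, w, p.map_comp])
  obtain ⟨s, hs, hst⟩ := hp.exists_section_of_fac hE c hc t ht
  have hts : t ≫ s = 𝟙 W := Cofork.IsColimit.hom_ext hC (by simp [reassoc_of% ht, hs])
  exact ⟨IsColimit.ofIsoColimit hC (Cofork.ext ⟨t, s, hts, hst⟩ ht)⟩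

end DGal

open DGal

theorem stmt_6 {E : Type u₁} [Category.{v₁} E] {C : Type u} [Category.{v} C]
    (p : E ⥤ C) (hp : IsClovenFibration p)
    (P : Precat E)
    -- the reflexive coequaliser `P₁ ⇉ P₀ → π₀(P)` in `E`
    (Z : E) (ρ : P.C0 ⟶ Z) (hwE : P.d0 ≫ ρ = P.d1 ≫ ρ)
    (hE : IsColimit (Cofork.ofπ ρ hwE))
    -- the reflexive coequaliser `C₁ ⇉ C₀ → π₀(ℂ)` in `C` of the image precategory
    (W : C) (c : (mapPrecat p P).C0 ⟶ W)
    (hwC : (mapPrecat p P).d0 ≫ c = (mapPrecat p P).d1 ≫ c)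
    (hC : IsColimit (Cofork.ofπ c hwC)) :
    Nonempty (IsColimit (Cofork.ofπ (p.map ρ)
      (show p.map P.d0 ≫ p.map ρ = p.map P.d1 ≫ p.map ρ by
        rw [← p.map_comp, ← p.map_comp, hwE]))) ∧
    Nonempty (p.obj Z ≅ W) := by
  obtain ⟨hpE⟩ := hp.nonempty_isColimit_map_cofork hE hC
  exact ⟨⟨hpE⟩, ⟨hpE.coconePointUniqueUpToIso hC⟩⟩
end

section
/- Let (X, δ_X) be a differential scheme that is simple with respect to Zariski open immersions, with categorical scheme of leaves given by the coequalizer X₁ ⇉ X₀ → π₀(X). Then the pushforward along η : X₀ → π₀(X) of the sheaf of constants of (O_X, δ_X) is the structure sheaf of π₀(X): η_* Const(O_X, δ_X) = O_{π₀(X)}. -/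
/-!
**Statement 9.** Let `(X, δ_X)` be a differential scheme which is simple with respect to
Zariski open immersions, with categorical scheme of leaves given by the coequaliser
`X₁ ⇉ X₀ → π₀(X)` (here `X₁` is the dual-numbers thickening of `X` encoding the
derivation, with projections `d₀, d₁`).  Then the pushforward along `η : X₀ ⟶ π₀(X)` of
the sheaf of constants of `(𝒪_X, δ_X)` is the structure sheaf of `π₀(X)`:
`η_* Const(𝒪_X, δ_X) = 𝒪_{π₀(X)}`, i.e. for every open `V ⊆ π₀(X)` the canonical map
`Γ(π₀(X), V) → Γ(X, η⁻¹V)` is injective with image the constants.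
-/

open CategoryTheory CategoryTheory.Limits AlgebraicGeometry

namespace DGal

/-- A derivation of the structure sheaf of a scheme: an additive Leibniz operator on
sections, compatible with restriction. -/
structure SheafDerivation (X : Scheme.{0}) where
  d : ∀ U : X.Opens, Γ(X, U) → Γ(X, U)
  map_add : ∀ (U : X.Opens) (a b : Γ(X, U)), d U (a + b) = d U a + d U b
  leibniz : ∀ (U : X.Opens) (a b : Γ(X, U)), d U (a * b) = a * d U b + b * d U a
  compat : ∀ (U V : X.Opens) (h : V ≤ U) (a : Γ(X, U)),
    d V (X.presheaf.map (homOfLE h).op a) = X.presheaf.map (homOfLE h).op (d U a)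

variable {X Y X₁ : Scheme.{0}} (η : X ⟶ Y) (d0 d1 : X₁ ⟶ X)
  (hcoeq : d0 ≫ η = d1 ≫ η)

/-- The first leg of the base change of `X₁ ⇉ X₀ → Y` along `q : Q ⟶ Y`. -/
noncomputable def bcLeg0 {Q : Scheme.{0}} (q : Q ⟶ Y) :
    pullback (d0 ≫ η) q ⟶ pullback η q :=
  pullback.map (d0 ≫ η) q η q d0 (𝟙 Q) (𝟙 Y) (by simp) (by simp)

/-- The second leg of the base change of `X₁ ⇉ X₀ → Y` along `q : Q ⟶ Y`. -/
noncomputable def bcLeg1 {Q : Scheme.{0}} (q : Q ⟶ Y) :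
    pullback (d0 ≫ η) q ⟶ pullback η q :=
  pullback.map (d0 ≫ η) q η q d1 (𝟙 Q) (𝟙 Y)
    (by rw [Category.comp_id, hcoeq]) (by simp)

/-- The base change of the coequaliser diagram `X₁ ⇉ X₀ → Y` along `q : Q ⟶ Y`,
as a cofork with vertex `Q`. -/
noncomputable def bcCofork {Q : Scheme.{0}} (q : Q ⟶ Y) :
    Cofork (bcLeg0 η d0 q) (bcLeg1 η d0 d1 hcoeq q) :=
  Cofork.ofπ (pullback.snd η q) (by
    simp only [bcLeg0, bcLeg1]
    rw [pullback.lift_snd, pullback.lift_snd])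

end DGal

/-! Global sections are morphisms to the affine line `Spec ℤ[T]`, so `Γ(-, ⊤)` turns a
coequaliser of schemes into an equaliser of rings. By simplicity, the base change of
`X₁ ⇉ X → Y` along `V ↪ Y` is a coequaliser; the global sections of its three terms are
`Γ(X₁, d₀⁻¹η⁻¹V)`, `Γ(X, η⁻¹V)` and `Γ(Y, V)`. Hence `η.app V`
identifies `Γ(Y, V)` with the sections `a` of `η⁻¹V` with `d₀^* a = d₁^* a`, which by `hδ`
are the constants. -/

namespace AlgebraicGeometry.Scheme

universe u

lemma Hom.appTop_eq_appLE {X Y : Scheme.{u}} (f : X ⟶ Y) : f.appTop = f.appLE ⊤ ⊤ le_top :=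
  (Hom.appLE_eq_app f).symm

noncomputable def homAffineLineEquiv (W : Scheme.{u}) :
    (W ⟶ Spec (CommRingCat.of (MvPolynomial PUnit.{u + 1} (ULift ℤ)))) ≃ Γ(W, ⊤) :=
  (AffineSpace.toSpecMvPolyIntEquiv PUnit).trans (Equiv.funUnique PUnit _)

lemma homAffineLineEquiv_comp {W Z : Scheme.{u}} (f : W ⟶ Z)
    (g : Z ⟶ Spec (CommRingCat.of (MvPolynomial PUnit.{u + 1} (ULift ℤ)))) :
    homAffineLineEquiv W (f ≫ g) = f.appTop (homAffineLineEquiv Z g) :=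
  rfl

section Coequalizer

variable {R P Q : Scheme.{u}} {l₀ l₁ : R ⟶ P} {c : Cofork l₀ l₁}

lemma injective_appTop_π_of_isColimit (hc : IsColimit c) : Function.Injective c.π.appTop := by
  intro a b hab
  apply (homAffineLineEquiv c.pt).symm.injective
  refine Cofork.IsColimit.hom_ext hc ((homAffineLineEquiv _).injective ?_)
  simpa only [homAffineLineEquiv_comp, Equiv.apply_symm_apply] using hab

lemma range_appTop_π_of_isColimit (hc : IsColimit c) :
    Set.range c.π.appTop = {a | l₀.appTop a = l₁.appTop a} := by
  ext a
  constructor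
  · rintro ⟨b, rfl⟩
    change l₀.appTop (c.π.appTop b) = l₁.appTop (c.π.appTop b)
    rw [← CommRingCat.comp_apply, ← CommRingCat.comp_apply, ← Hom.comp_appTop, ← Hom.comp_appTop,
      c.condition]
  · intro (h : l₀.appTop a = l₁.appTop a)
    set g := (homAffineLineEquiv P).symm a
    have hg : l₀ ≫ g = l₁ ≫ g := (homAffineLineEquiv R).injective <| by
      simpa only [homAffineLineEquiv_comp, g, Equiv.apply_symm_apply] using h
    refine ⟨homAffineLineEquiv c.pt (Cofork.IsColimit.desc hc g hg), ?_⟩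
    rw [← homAffineLineEquiv_comp, Cofork.IsColimit.π_desc', Equiv.apply_symm_apply]

end Coequalizer

section PullbackOpen

variable {X Y : Scheme.{u}} (f : X ⟶ Y) (V : Y.Opens)

lemma top_le_pullback_fst_preimage_preimage :
    (⊤ : (pullback f V.ι).Opens) ≤ pullback.fst f V.ι ⁻¹ᵁ f ⁻¹ᵁ V := by
  rw [← Hom.comp_preimage, pullback.condition, Hom.comp_preimage, Opens.ι_preimage_self,
    Hom.preimage_top]

noncomputable def pullbackFstAppLE : Γ(X, f ⁻¹ᵁ V) ⟶ Γ(pullback f V.ι, ⊤) :=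
  (pullback.fst f V.ι).appLE (f ⁻¹ᵁ V) ⊤ (top_le_pullback_fst_preimage_preimage f V)

lemma bijective_pullbackFstAppLE : Function.Bijective (pullbackFstAppLE f V) := by
  set e := (pullbackRestrictIsoRestrict f V).hom
  have hfactor : pullbackFstAppLE f V =
      (f ⁻¹ᵁ V).ι.appLE (f ⁻¹ᵁ V) ⊤ (Opens.ι_preimage_self _).ge ≫ e.appLE ⊤ ⊤ le_top := by
    rw [pullbackFstAppLE, Hom.appLE_comp_appLE (e₂ := le_top)]
    congr 1
    exact (pullbackRestrictIsoRestrict_hom_ι f V).symm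
  have : IsIso (e.appLE ⊤ ⊤ le_top) := by
    rw [← Hom.appTop_eq_appLE]
    exact Hom.instIsIsoCommRingCatApp _ _
  rw [hfactor]
  exact ConcreteCategory.bijective_of_isIso _

lemma app_comp_pullbackFstAppLE :
    f.app V ≫ pullbackFstAppLE f V =
      V.ι.appLE V ⊤ (Opens.ι_preimage_self _).ge ≫ (pullback.snd f V.ι).appTop := by
  rw [Hom.appTop_eq_appLE, Hom.appLE_comp_appLE (e₂ := le_top), pullbackFstAppLE,
    Hom.app_eq_appLE, Hom.appLE_comp_appLE]
  congr 1
  exact pullback.condition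

lemma pullbackFstAppLE_comp_map_appTop {Z : Scheme.{u}} (g : Z ⟶ X) (h : Z ⟶ Y)
    (w : g ≫ f = h) :
    pullbackFstAppLE f V ≫
        (pullback.map h V.ι f V.ι g (𝟙 _) (𝟙 _) (by simp [w]) (by simp)).appTop =
      g.app (f ⁻¹ᵁ V) ≫ (pullback.fst h V.ι).appLE (g ⁻¹ᵁ f ⁻¹ᵁ V) ⊤
        ((top_le_pullback_fst_preimage_preimage h V).trans_eq
          (by rw [← w, Hom.comp_preimage])) := by
  rw [Hom.appTop_eq_appLE, pullbackFstAppLE, Hom.appLE_comp_appLE (e₂ := le_top)]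
  simp only [pullback.lift_fst, Hom.comp_appLE]

end PullbackOpen

end AlgebraicGeometry.Scheme

open DGal

theorem stmt_9_general
    (X Y X₁ : Scheme.{0}) (η : X ⟶ Y) (δ : SheafDerivation X)
    (d0 d1 : X₁ ⟶ X)
    (hpre : ∀ U : X.Opens, d0 ⁻¹ᵁ U = d1 ⁻¹ᵁ U)
    (hδ : ∀ (U : X.Opens) (a : Γ(X, U)),
      d0.app U a = X₁.presheaf.map (eqToHom (hpre U)).op (d1.app U a) ↔ δ.d U a = 0)
    (hcoeq : d0 ≫ η = d1 ≫ η)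
    (hsimple : ∀ V : Y.Opens,
      Nonempty (IsColimit (bcCofork η d0 d1 hcoeq V.ι))) :
    ∀ V : Y.Opens,
      Function.Injective (η.app V) ∧
      Set.range (η.app V) = {a : Γ(X, η ⁻¹ᵁ V) | δ.d (η ⁻¹ᵁ V) a = 0} := by
  intro V
  obtain ⟨hc⟩ := hsimple V
  set φ := Scheme.pullbackFstAppLE η V
  set ρ := V.ι.appLE V ⊤ V.ι_preimage_self.ge
  have hφ : Function.Bijective φ := Scheme.bijective_pullbackFstAppLE η V
  have hρ : Function.Bijective ρ := ConcreteCategory.bijective_of_isIso ρ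
  have hsq (b : Γ(Y, V)) : φ (η.app V b) = (pullback.snd η V.ι).appTop (ρ b) := by
    rw [← CommRingCat.comp_apply, Scheme.app_comp_pullbackFstAppLE, CommRingCat.comp_apply]
  have hconst (a : Γ(X, η ⁻¹ᵁ V)) : (bcLeg0 η d0 V.ι).appTop (φ a) =
      (bcLeg1 η d0 d1 hcoeq V.ι).appTop (φ a) ↔ δ.d (η ⁻¹ᵁ V) a = 0 := by
    rw [← hδ, ← CommRingCat.comp_apply, ← CommRingCat.comp_apply, bcLeg0, bcLeg1,
      Scheme.pullbackFstAppLE_comp_map_appTop _ _ _ _ rfl,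
      Scheme.pullbackFstAppLE_comp_map_appTop _ _ _ _ hcoeq.symm, CommRingCat.comp_apply,
      CommRingCat.comp_apply, ← Scheme.Hom.map_appLE' _ _ (hpre _), CommRingCat.comp_apply]
    exact (Scheme.bijective_pullbackFstAppLE (d0 ≫ η) V).1.eq_iff
  refine ⟨fun a b hab ↦ hρ.1 (Scheme.injective_appTop_π_of_isColimit hc ?_), ?_⟩
  · change (pullback.snd η V.ι).appTop (ρ a) = (pullback.snd η V.ι).appTop (ρ b)
    rw [← hsq, ← hsq, hab]
  · ext a
    have hrange : a ∈ Set.range (η.app V) ↔ φ a ∈ Set.range (pullback.snd η V.ι).appTop := by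
      constructor
      · rintro ⟨b, rfl⟩
        exact ⟨ρ b, (hsq b).symm⟩
      · rintro ⟨c, hac⟩
        obtain ⟨b, rfl⟩ := hρ.2 c
        exact ⟨b, hφ.1 (by rw [hsq, hac])⟩
    rw [hrange, show Set.range (pullback.snd η V.ι).appTop = _ from
      Scheme.range_appTop_π_of_isColimit hc]
    exact hconst a

theorem stmt_9
    (X Y X₁ : Scheme.{0}) (η : X ⟶ Y) (δ : SheafDerivation X)
    (d0 d1 : X₁ ⟶ X)
    (hpre : ∀ U : X.Opens, d0 ⁻¹ᵁ U = d1 ⁻¹ᵁ U)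
    (hδ : ∀ (U : X.Opens) (a : Γ(X, U)),
      d0.app U a = X₁.presheaf.map (eqToHom (hpre U)).op (d1.app U a) ↔ δ.d U a = 0)
    (hcoeq : d0 ≫ η = d1 ≫ η)
    (hπ : Nonempty (IsColimit (Cofork.ofπ η hcoeq)))
    (hsimple : ∀ V : Y.Opens,
      Nonempty (IsColimit (bcCofork η d0 d1 hcoeq V.ι))) :
    ∀ V : Y.Opens,
      Function.Injective (η.app V) ∧
      Set.range (η.app V) = {a : Γ(X, η ⁻¹ᵁ V) | δ.d (η ⁻¹ᵁ V) a = 0} :=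
  stmt_9_general X Y X₁ η δ d0 d1 hpre hδ hcoeq hsimple
end
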